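/- arXiv:1312.2138 — 3 statements merged into one kernel-verified Lean document; each statement's English description precedes it below -/
import Mathlib

section
/- Let f : [0,∞) → [0,∞) and α : [0,1] → (0,∞) be continuous functions with f(0) = 0, and set F(ξ) = ∫₀^ξ f(t) dt. Suppose there exist b, c > 0 such that F(ξ) = c ξ² for all ξ ∈ (0,b]. Then there exists r > 0 such that there is NO nonempty open interval I ⊆ (0,∞) with the property that for every λ ∈ I there is a twice continuously differentiable function u : [0,1] → ℝ satisfying −u''(t) = λ α(t) f(u(t)) on [0,1], u > 0 on (0,1), u(0) = u(1) = 0, and ∫₀¹ |u'(t)|² dt < r. -/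
/-! Take `r = b²`. By Cauchy–Schwarz, a solution with `∫ |u'|² < b²` satisfies `0 ≤ u < b`, where
`f ξ = F' ξ = 2 c ξ`; so `u` is a positive Dirichlet eigenfunction of the linear problem
`-u'' = 2 c λ α u`. Positive eigenfunctions `u₁, u₂` for `λ₁ ≠ λ₂` cannot coexist: the Wronskian
`u₁' u₂ - u₁ u₂'` vanishes at `0` and `1`, yet its derivative `2 c (λ₂ - λ₁) α u₁ u₂` has a strict
sign on `(0, 1)`. -/

open Set MeasureTheory intervalIntegral

section Interval

variable {a b : ℝ}

theorem integral_eq_sub_of_hasDerivWithinAt_Icc (hab : a ≤ b) {g g' : ℝ → ℝ}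
    (hg : ∀ t ∈ Icc a b, HasDerivWithinAt g (g' t) (Icc a b) t)
    (hint : IntervalIntegrable g' volume a b) :
    ∫ t in a..b, g' t = g b - g a :=
  integral_eq_sub_of_hasDeriv_right_of_le hab (fun t ht => (hg t ht).continuousWithinAt)
    (fun t ht => ((hg t (Ioo_subset_Icc_self ht)).hasDerivAt
      (Icc_mem_nhds ht.1 ht.2)).hasDerivWithinAt) hint

theorem sq_integral_le_mul_integral_sq (hab : a ≤ b) {g : ℝ → ℝ}
    (hg : IntervalIntegrable g volume a b)
    (hg2 : IntervalIntegrable (fun t => g t ^ 2) volume a b) :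
    (∫ t in a..b, g t) ^ 2 ≤ (b - a) * ∫ t in a..b, g t ^ 2 := by
  rcases hab.eq_or_lt with rfl | hlt
  · simp
  set I := ∫ t in a..b, g t
  have hvar : 0 ≤ ∫ t in a..b, ((b - a) ^ 2 * g t ^ 2 - (2 * (b - a) * I) * g t + I ^ 2) :=
    calc (0:ℝ) ≤ ∫ t in a..b, ((b - a) * g t - I) ^ 2 :=
          integral_nonneg hab fun t _ => sq_nonneg _
      _ = _ := integral_congr fun t _ => by ring
  rw [integral_add ((hg2.const_mul _).sub (hg.const_mul _)) intervalIntegrable_const,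
    integral_sub (hg2.const_mul _) (hg.const_mul _), intervalIntegral.integral_const_mul,
    intervalIntegral.integral_const_mul, intervalIntegral.integral_const, smul_eq_mul] at hvar
  nlinarith [sub_pos.mpr hlt]

theorem sq_sub_le_mul_integral_sq_of_hasDerivWithinAt {u d : ℝ → ℝ}
    (hu : ∀ t ∈ Icc a b, HasDerivWithinAt u (d t) (Icc a b) t) (hd : ContinuousOn d (Icc a b))
    {t : ℝ} (ht : t ∈ Icc a b) :
    (u t - u a) ^ 2 ≤ (b - a) * ∫ s in a..b, d s ^ 2 := by
  have hsub : Icc a t ⊆ Icc a b := Icc_subset_Icc_right ht.2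
  have hd2 : ContinuousOn (fun s => d s ^ 2) (Icc a b) := hd.pow 2
  have hftc : ∫ s in a..t, d s = u t - u a :=
    integral_eq_sub_of_hasDerivWithinAt_Icc ht.1 (fun s hs => (hu s (hsub hs)).mono hsub)
      ((hd.mono hsub).intervalIntegrable_of_Icc ht.1)
  have hmono : ∫ s in a..t, d s ^ 2 ≤ ∫ s in a..b, d s ^ 2 :=
    integral_mono_interval le_rfl ht.1 ht.2 (Filter.Eventually.of_forall fun s => sq_nonneg (d s))
      (hd2.intervalIntegrable_of_Icc (ht.1.trans ht.2))
  calc (u t - u a) ^ 2 = (∫ s in a..t, d s) ^ 2 := by rw [hftc]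
    _ ≤ (t - a) * ∫ s in a..t, d s ^ 2 :=
      sq_integral_le_mul_integral_sq ht.1 ((hd.mono hsub).intervalIntegrable_of_Icc ht.1)
        ((hd2.mono hsub).intervalIntegrable_of_Icc ht.1)
    _ ≤ (b - a) * ∫ s in a..b, d s ^ 2 :=
      mul_le_mul (by linarith [ht.2]) hmono (integral_nonneg ht.1 fun s _ => sq_nonneg (d s))
        (by linarith [ht.1, ht.2])

def IsPosDirichletEigenfunction (a b : ℝ) (w : ℝ → ℝ) (μ : ℝ) (u : ℝ → ℝ) : Prop :=
  ∃ d e : ℝ → ℝ, (∀ t ∈ Icc a b, HasDerivWithinAt u (d t) (Icc a b) t) ∧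
    (∀ t ∈ Icc a b, HasDerivWithinAt d (e t) (Icc a b) t) ∧
    (∀ t ∈ Icc a b, -e t = μ * w t * u t) ∧
    (∀ t ∈ Ioo a b, 0 < u t) ∧ u a = 0 ∧ u b = 0

theorem IsPosDirichletEigenfunction.eigenvalue_eq {w u₁ u₂ : ℝ → ℝ} {μ₁ μ₂ : ℝ} (hab : a < b)
    (hw : ContinuousOn w (Icc a b)) (hw_pos : ∀ t ∈ Ioo a b, 0 < w t)
    (h₁ : IsPosDirichletEigenfunction a b w μ₁ u₁)
    (h₂ : IsPosDirichletEigenfunction a b w μ₂ u₂) : μ₁ = μ₂ := by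
  obtain ⟨d₁, e₁, hu₁, hd₁, hode₁, hpos₁, ha₁, hb₁⟩ := h₁
  obtain ⟨d₂, e₂, hu₂, hd₂, hode₂, hpos₂, ha₂, hb₂⟩ := h₂
  have hW : ∀ t ∈ Icc a b, HasDerivWithinAt (fun s => d₁ s * u₂ s - u₁ s * d₂ s)
      ((μ₂ - μ₁) * (w t * (u₁ t * u₂ t))) (Icc a b) t := fun t ht =>
    (((hd₁ t ht).mul (hu₂ t ht)).sub ((hu₁ t ht).mul (hd₂ t ht))).congr_deriv <| by
      linear_combination u₁ t * hode₂ t ht - u₂ t * hode₁ t ht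
  have hu₁c : ContinuousOn u₁ (Icc a b) := fun t ht => (hu₁ t ht).continuousWithinAt
  have hu₂c : ContinuousOn u₂ (Icc a b) := fun t ht => (hu₂ t ht).continuousWithinAt
  have hint : IntervalIntegrable (fun t => w t * (u₁ t * u₂ t)) volume a b :=
    (hw.mul (hu₁c.mul hu₂c)).intervalIntegrable_of_Icc hab.le
  have hzero := integral_eq_sub_of_hasDerivWithinAt_Icc hab.le hW (hint.const_mul _)
  rw [intervalIntegral.integral_const_mul, ha₁, hb₁, ha₂, hb₂] at hzero
  have hposint : 0 < ∫ t in a..b, w t * (u₁ t * u₂ t) :=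
    intervalIntegral_pos_of_pos_on hint
      (fun t ht => mul_pos (hw_pos t ht) (mul_pos (hpos₁ t ht) (hpos₂ t ht))) hab
  have := (mul_eq_zero.mp (by simpa using hzero)).resolve_right hposint.ne'
  linarith

end Interval

theorem eq_two_mul_mul_of_integral_eq_mul_sq {f : ℝ → ℝ} {b c : ℝ}
    (hf : ContinuousOn f (Ici 0)) (hf0 : f 0 = 0)
    (hF : ∀ ξ ∈ Ioc (0:ℝ) b, ∫ t in (0:ℝ)..ξ, f t = c * ξ ^ 2) {ξ : ℝ} (hξ : ξ ∈ Ico 0 b) :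
    f ξ = 2 * c * ξ := by
  obtain ⟨h0, hξb⟩ := hξ
  rcases h0.eq_or_lt with rfl | hpos
  · simp [hf0]
  have hFderiv : HasDerivAt (fun x => ∫ t in (0:ℝ)..x, f t) (f ξ) ξ :=
    integral_hasDerivAt_right ((hf.mono Icc_subset_Ici_self).intervalIntegrable_of_Icc h0)
      ((hf.mono Ioi_subset_Ici_self).stronglyMeasurableAtFilter isOpen_Ioi ξ hpos)
      (hf.continuousAt (Ici_mem_nhds hpos))
  have hsq : HasDerivAt (fun x => c * x ^ 2) (2 * c * ξ) ξ :=
    ((hasDerivAt_pow 2 ξ).const_mul c).congr_deriv (by push_cast; ring)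
  refine hFderiv.unique (hsq.congr_of_eventuallyEq ?_)
  exact Filter.eventuallyEq_of_mem (Ioo_mem_nhds hpos hξb) fun x hx => hF x ⟨hx.1, hx.2.le⟩

theorem stmt2_general
    (f α : ℝ → ℝ)
    (hf_cont : ContinuousOn f (Ici 0))
    (hf0 : f 0 = 0)
    (hα_cont : ContinuousOn α (Icc 0 1))
    (hα_pos : ∀ t ∈ Icc (0:ℝ) 1, 0 < α t)
    (F : ℝ → ℝ) (hF : ∀ ξ, F ξ = ∫ t in (0:ℝ)..ξ, f t)
    (b c : ℝ) (hb : 0 < b) (hc : 0 < c)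
    (hconst : ∀ ξ ∈ Ioc (0:ℝ) b, F ξ = c * ξ ^ 2) :
    ∃ r > (0:ℝ), ¬ ∃ p q : ℝ, 0 ≤ p ∧ p < q ∧ ∀ lam ∈ Ioo p q,
      ∃ u d d2 : ℝ → ℝ,
        (∀ t ∈ Icc (0:ℝ) 1, HasDerivWithinAt u (d t) (Icc 0 1) t) ∧
        (∀ t ∈ Icc (0:ℝ) 1, HasDerivWithinAt d (d2 t) (Icc 0 1) t) ∧
        ContinuousOn d2 (Icc 0 1) ∧
        (∀ t ∈ Icc (0:ℝ) 1, -d2 t = lam * α t * f (u t)) ∧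
        (∀ t ∈ Ioo (0:ℝ) 1, 0 < u t) ∧
        u 0 = 0 ∧ u 1 = 0 ∧
        (∫ t in (0:ℝ)..1, |d t| ^ 2) < r := by
  refine ⟨b ^ 2, by positivity, ?_⟩
  rintro ⟨p, q, -, hpq, hsol⟩
  have hf_lin : ∀ ξ ∈ Ico 0 b, f ξ = 2 * c * ξ := fun ξ =>
    eq_two_mul_mul_of_integral_eq_mul_sq hf_cont hf0 fun ξ hξ => (hF ξ).symm.trans (hconst ξ hξ)
  have heigen : ∀ lam ∈ Ioo p q,
      ∃ u, IsPosDirichletEigenfunction 0 1 (fun t => 2 * c * α t) lam u := by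
    intro lam hlam
    obtain ⟨u, d, e, hu, hd, -, hode, hpos, hu0, hu1, henergy⟩ := hsol lam hlam
    refine ⟨u, d, e, hu, hd, fun t ht => ?_, hpos, hu0, hu1⟩
    have hnonneg : 0 ≤ u t := by
      rcases ht.1.eq_or_lt with rfl | h0
      · exact hu0.ge
      rcases ht.2.eq_or_lt with rfl | h1
      · exact hu1.ge
      exact (hpos t ⟨h0, h1⟩).le
    have hsq : u t ^ 2 < b ^ 2 := by
      have := sq_sub_le_mul_integral_sq_of_hasDerivWithinAt hu
        (fun s hs => (hd s hs).continuousWithinAt) ht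
      simp only [hu0, sub_zero, one_mul, sq_abs] at this henergy
      linarith
    have hlt : u t < b := (pow_lt_pow_iff_left₀ hnonneg hb.le two_ne_zero).mp hsq
    rw [hode t ht, hf_lin (u t) ⟨hnonneg, hlt⟩]
    ring
  obtain ⟨u₁, hu₁⟩ := heigen ((2 * p + q) / 3) ⟨by linarith, by linarith⟩
  obtain ⟨u₂, hu₂⟩ := heigen ((p + 2 * q) / 3) ⟨by linarith, by linarith⟩
  have := hu₁.eigenvalue_eq zero_lt_one (continuousOn_const.mul hα_cont)
    (fun t ht => mul_pos (by positivity) (hα_pos t (Ioo_subset_Icc_self ht))) hu₂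
  linarith

theorem stmt2
    (f α : ℝ → ℝ)
    (hf_cont : ContinuousOn f (Ici 0))
    (hf_nonneg : ∀ ξ ∈ Ici (0:ℝ), 0 ≤ f ξ)
    (hf0 : f 0 = 0)
    (hα_cont : ContinuousOn α (Icc 0 1))
    (hα_pos : ∀ t ∈ Icc (0:ℝ) 1, 0 < α t)
    (F : ℝ → ℝ) (hF : ∀ ξ, F ξ = ∫ t in (0:ℝ)..ξ, f t)
    (b c : ℝ) (hb : 0 < b) (hc : 0 < c)
    (hconst : ∀ ξ ∈ Ioc (0:ℝ) b, F ξ = c * ξ ^ 2) :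
    ∃ r > (0:ℝ), ¬ ∃ p q : ℝ, 0 ≤ p ∧ p < q ∧ ∀ lam ∈ Ioo p q,
      ∃ u d d2 : ℝ → ℝ,
        (∀ t ∈ Icc (0:ℝ) 1, HasDerivWithinAt u (d t) (Icc 0 1) t) ∧
        (∀ t ∈ Icc (0:ℝ) 1, HasDerivWithinAt d (d2 t) (Icc 0 1) t) ∧
        ContinuousOn d2 (Icc 0 1) ∧
        (∀ t ∈ Icc (0:ℝ) 1, -d2 t = lam * α t * f (u t)) ∧
        (∀ t ∈ Ioo (0:ℝ) 1, 0 < u t) ∧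
        u 0 = 0 ∧ u 1 = 0 ∧
        (∫ t in (0:ℝ)..1, |d t| ^ 2) < r :=
  stmt2_general f α hf_cont hf0 hα_cont hα_pos F hF b c hb hc hconst
end

section
/- Let X be a real Hilbert space, and for r > 0 let B_r = {x ∈ X : ‖x‖² ≤ r}. Let J : X → ℝ be sequentially weakly upper semicontinuous (for every sequence (x_n) converging weakly to x in X, limsup J(x_n) ≤ J(x)) and Gâteaux differentiable, with Gâteaux derivative represented by a map J' : X → X (i.e., for every x, v ∈ X, the directional derivative of J at x in direction v equals ⟨J'(x), v⟩), and assume J(0) = 0. Suppose that for some r > 0 there exists x̂ ∈ B_r which is a global maximum of the restriction of J to B_r and which satisfies ⟨J'(x̂), x̂⟩ < 2 J(x̂). Then there exists a nonempty open interval I ⊆ (0,∞) such that for every λ ∈ I the equation x = λ J'(x) has a solution x ≠ 0 with ‖x‖² < r. -/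
/-!
For `lam` near `lam₀ = r / (2 J x̂)` maximize `energy J lam y = lam J y - ‖y‖² / 2` over
`B_r` by the direct method: bounded sequences have weakly convergent subsequences (sequential
Banach–Alaoglu on a separable closed subspace), `J` is weakly upper semicontinuous and the norm
weakly lower semicontinuous. The hypothesis `⟪J' x̂, x̂⟫ < 2 J x̂` gives a point `x₀` of the open
ball with `energy J lam₀ x₀ > 0 = energy J lam₀ 0`, which keeps the maximizer `x` away from `0`;
and since `lam₀ J x̂ = r / 2`, the bound `J x ≤ J x̂` forces `‖x‖² < r`. So `x` is an interior
maximum, where the Gâteaux gradient `lam J' x - x` vanishes. These strict inequalities are affine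
in `lam`, so they persist on an open interval around `lam₀`.
-/

open Set Filter Topology TopologicalSpace
open scoped RealInnerProductSpace

theorem HasDerivAt.eventually_nhdsLT_lt {f : ℝ → ℝ} {f' a : ℝ} (hf : HasDerivAt f f' a)
    (hf' : f' < 0) : ∀ᶠ t in 𝓝[<] a, f a < f t := by
  have hslope := (hasDerivAt_iff_tendsto_slope.1 hf).mono_left (nhdsLT_le_nhdsNE a)
  filter_upwards [hslope.eventually_lt_const hf', self_mem_nhdsWithin] with t hneg (ht : t < a)
  rwa [slope_comm, slope_neg_iff_of_le ht.le] at hneg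

section Hilbert

variable {X : Type*} [NormedAddCommGroup X] [InnerProductSpace ℝ X]

def WeakTendsto (u : ℕ → X) (x : X) : Prop :=
  ∀ v : X, Tendsto (fun n => ⟪u n, v⟫) atTop (𝓝 ⟪x, v⟫)

/-- For a sequence `J ∘ u` unbounded above, `limsup` is a junk value; the definition is only
applied to sequences bounded above. -/
def WeakSeqUpperSemicontinuous (J : X → ℝ) : Prop :=
  ∀ (x : X) (u : ℕ → X), WeakTendsto u x → limsup (J ∘ u) atTop ≤ J x

def HasGateauxGradient (J : X → ℝ) (J' : X → X) : Prop :=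
  ∀ x v : X, HasDerivAt (fun s : ℝ => J (x + s • v)) ⟪J' x, v⟫ 0

noncomputable def energy (J : X → ℝ) (lam : ℝ) (y : X) : ℝ := lam * J y - ‖y‖ ^ 2 / 2

theorem real_inner_sub_half_norm_sq_le (a b : X) : ⟪a, b⟫ - ‖b‖ ^ 2 / 2 ≤ ‖a‖ ^ 2 / 2 := by
  nlinarith [norm_sub_sq_real a b, sq_nonneg ‖a - b‖]

theorem norm_add_smul_self_sq (x : X) (s : ℝ) : ‖x + s • x‖ ^ 2 = (1 + s) ^ 2 * ‖x‖ ^ 2 := by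
  have : x + s • x = (1 + s) • x := by rw [add_smul, one_smul]
  rw [this, norm_smul, mul_pow, Real.norm_eq_abs, sq_abs]

namespace WeakTendsto

variable {u : ℕ → X} {x : X}

theorem tendsto_inner_sub_half_norm_sq (h : WeakTendsto u x) :
    Tendsto (fun n => ⟪u n, x⟫ - ‖x‖ ^ 2 / 2) atTop (𝓝 (‖x‖ ^ 2 / 2)) := by
  have := (h x).sub_const (‖x‖ ^ 2 / 2)
  rwa [real_inner_self_eq_norm_sq, sub_half] at this

theorem norm_sq_le (h : WeakTendsto u x) {r : ℝ} (hu : ∀ n, ‖u n‖ ^ 2 ≤ r) : ‖x‖ ^ 2 ≤ r := by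
  have : ‖x‖ ^ 2 / 2 ≤ r / 2 := le_of_tendsto' h.tendsto_inner_sub_half_norm_sq fun n =>
    (real_inner_sub_half_norm_sq_le _ _).trans (by linarith [hu n])
  linarith

end WeakTendsto

theorem exists_weakTendsto_subseq_of_separableSpace [CompleteSpace X] [SeparableSpace X]
    {u : ℕ → X} {C : ℝ} (hu : ∀ n, ‖u n‖ ≤ C) : ∃ x φ, StrictMono φ ∧ WeakTendsto (u ∘ φ) x := by
  let f : ℕ → WeakDual ℝ X := fun n => StrongDual.toWeakDual (InnerProductSpace.toDual ℝ X (u n))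
  have hf : ∀ n, f n ∈ WeakDual.toStrongDual ⁻¹' Metric.closedBall 0 C := fun n => by
    simpa [f] using hu n
  obtain ⟨ℓ, -, φ, hφ, hlim⟩ := WeakDual.isSeqCompact_closedBall ℝ X 0 C hf
  refine ⟨(InnerProductSpace.toDual ℝ X).symm (WeakDual.toStrongDual ℓ), φ, hφ, fun v => ?_⟩
  rw [InnerProductSpace.toDual_symm_apply]
  exact ((WeakDual.eval_continuous v).tendsto ℓ).comp hlim

/-- Reduction to the separable case: pass to the closed span `Y` of the sequence, and test against
`v` through its projection onto `Y`. -/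
theorem exists_weakTendsto_subseq [CompleteSpace X] {u : ℕ → X} {C : ℝ} (hu : ∀ n, ‖u n‖ ≤ C) :
    ∃ x φ, StrictMono φ ∧ WeakTendsto (u ∘ φ) x := by
  set Y := (Submodule.span ℝ (range u)).topologicalClosure
  have : CompleteSpace Y := (Submodule.isClosed_topologicalClosure _).completeSpace_coe
  have : SeparableSpace Y := by
    refine IsSeparable.separableSpace ?_
    simpa [Y, Submodule.topologicalClosure_coe] using
      ((countable_range u).isSeparable.span (R := ℝ)).closure
  have huY : ∀ n, u n ∈ Y := fun n =>
    Submodule.le_topologicalClosure _ (Submodule.subset_span (mem_range_self n))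
  obtain ⟨x, φ, hφ, hx⟩ := exists_weakTendsto_subseq_of_separableSpace
    (u := fun n => (⟨u n, huY n⟩ : Y)) (C := C) hu
  refine ⟨x, φ, hφ, fun v => ?_⟩
  simpa using hx (Y.orthogonalProjectionOnto v)

theorem exists_isMaxOn_of_weakTendsto [CompleteSpace X] {F : X → ℝ} {r : ℝ} (hr : 0 ≤ r)
    (hbdd : BddAbove (F '' {y | ‖y‖ ^ 2 ≤ r}))
    (husc : ∀ (u : ℕ → X) (x : X) (M : ℝ), (∀ n, ‖u n‖ ^ 2 ≤ r) → WeakTendsto u x →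
      Tendsto (F ∘ u) atTop (𝓝 M) → M ≤ F x) :
    ∃ x, ‖x‖ ^ 2 ≤ r ∧ IsMaxOn F {y | ‖y‖ ^ 2 ≤ r} x := by
  obtain ⟨m, -, hm, hmS⟩ := exists_seq_tendsto_sSup
    (⟨F 0, 0, by simpa using hr, rfl⟩ : (F '' {y | ‖y‖ ^ 2 ≤ r}).Nonempty) hbdd
  choose u hu hFu using hmS
  obtain ⟨x, φ, hφ, hx⟩ := exists_weakTendsto_subseq fun n => Real.le_sqrt_of_sq_le (hu n)
  refine ⟨x, hx.norm_sq_le fun n => hu (φ n), fun y hy => ?_⟩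
  calc F y ≤ sSup (F '' {y | ‖y‖ ^ 2 ≤ r}) := le_csSup hbdd (mem_image_of_mem F hy)
    _ ≤ F x := husc _ x _ (fun n => hu (φ n)) hx <| by
      simpa [Function.comp_def, hFu] using hm.comp hφ.tendsto_atTop

theorem hasDerivAt_half_norm_sq_add_smul (x v : X) :
    HasDerivAt (fun s : ℝ => ‖x + s • v‖ ^ 2 / 2) ⟪x, v⟫ 0 := by
  have hline : HasDerivAt (fun s : ℝ => x + s • v) v 0 := by
    simpa using ((hasDerivAt_id (0 : ℝ)).smul_const v).const_add x
  simpa using hline.norm_sq.div_const 2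

theorem HasGateauxGradient.hasDerivAt_energy {J : X → ℝ} {J' : X → X}
    (hJ : HasGateauxGradient J J') (lam : ℝ) (x v : X) :
    HasDerivAt (fun s : ℝ => energy J lam (x + s • v)) ⟪lam • J' x - x, v⟫ 0 := by
  rw [inner_sub_left, real_inner_smul_left]
  exact ((hJ x v).const_mul lam).sub (hasDerivAt_half_norm_sq_add_smul x v)

theorem eq_zero_of_isLocalMax_of_hasDerivAt_inner {F : X → ℝ} {x g : X}
    (hF : ∀ v, HasDerivAt (fun s : ℝ => F (x + s • v)) ⟪g, v⟫ 0) (hmax : IsLocalMax F x) :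
    g = 0 := by
  have hline : IsLocalMax (fun s : ℝ => F (x + s • g)) 0 :=
    IsLocalMax.comp_continuous (g := fun s : ℝ => x + s • g) (by simpa using hmax) (by fun_prop)
  exact inner_self_eq_zero.1 (hline.hasDerivAt_eq_zero (hF g))

variable {J : X → ℝ} {J' : X → X} {r Jmax lam : ℝ}

/-- The norm term is weakly lower semicontinuous because
`‖u n‖² / 2 ≥ ⟪u n, x⟫ - ‖x‖² / 2 → ‖x‖² / 2`. -/
theorem energy_le_of_weakTendsto (hJ : WeakSeqUpperSemicontinuous J) (hlam : 0 < lam)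
    {u : ℕ → X} {x : X} {M : ℝ} (hbdd : ∀ n, J (u n) ≤ Jmax) (hu : WeakTendsto u x)
    (hM : Tendsto (energy J lam ∘ u) atTop (𝓝 M)) : M ≤ energy J lam x := by
  have hlow : Tendsto (fun n => (energy J lam (u n) + (⟪u n, x⟫ - ‖x‖ ^ 2 / 2)) / lam) atTop
      (𝓝 ((M + ‖x‖ ^ 2 / 2) / lam)) :=
    (hM.add hu.tendsto_inner_sub_half_norm_sq).div_const lam
  have hle : ∀ n, (energy J lam (u n) + (⟪u n, x⟫ - ‖x‖ ^ 2 / 2)) / lam ≤ J (u n) := fun n => by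
    rw [div_le_iff₀ hlam, energy]
    linarith [real_inner_sub_half_norm_sq_le (u n) x]
  have : (M + ‖x‖ ^ 2 / 2) / lam ≤ J x :=
    calc (M + ‖x‖ ^ 2 / 2) / lam = limsup _ atTop := hlow.limsup_eq.symm
      _ ≤ limsup (J ∘ u) atTop :=
        limsup_le_limsup (Eventually.of_forall hle) hlow.isBoundedUnder_ge.isCoboundedUnder_le
          (isBoundedUnder_of ⟨Jmax, hbdd⟩)
      _ ≤ J x := hJ x u hu
  rw [div_le_iff₀ hlam] at this
  rw [energy]
  linarith

theorem exists_isMaxOn_energy [CompleteSpace X] (hJ : WeakSeqUpperSemicontinuous J) (hr : 0 ≤ r)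
    (hJmax : ∀ y : X, ‖y‖ ^ 2 ≤ r → J y ≤ Jmax) (hlam : 0 < lam) :
    ∃ x, ‖x‖ ^ 2 ≤ r ∧ IsMaxOn (energy J lam) {y | ‖y‖ ^ 2 ≤ r} x := by
  refine exists_isMaxOn_of_weakTendsto hr ⟨lam * Jmax, ?_⟩ fun u x M hu hux hM =>
    energy_le_of_weakTendsto hJ hlam (fun n => hJmax _ (hu n)) hux hM
  rintro _ ⟨y, hy, rfl⟩
  have := mul_le_mul_of_nonneg_left (hJmax y hy) hlam.le
  rw [energy]
  linarith [sq_nonneg ‖y‖]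

theorem exists_eq_smul_gradient_of_energy_pos [CompleteSpace X]
    (hJ : WeakSeqUpperSemicontinuous J) (hJ' : HasGateauxGradient J J') (hJ0 : J 0 = 0)
    (hJmax : ∀ y : X, ‖y‖ ^ 2 ≤ r → J y ≤ Jmax) (hlam : 0 < lam) {x₀ : X} (hx₀ : ‖x₀‖ ^ 2 ≤ r)
    (hpos : 0 < energy J lam x₀) (hgap : lam * Jmax - energy J lam x₀ < r / 2) :
    ∃ x : X, x ≠ 0 ∧ ‖x‖ ^ 2 < r ∧ x = lam • J' x := by
  obtain ⟨x, hxr, hmax⟩ := exists_isMaxOn_energy hJ ((sq_nonneg _).trans hx₀) hJmax hlam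
  have hx₀x : energy J lam x₀ ≤ energy J lam x := hmax hx₀
  have hne : x ≠ 0 := by
    rintro rfl
    have : energy J lam 0 = 0 := by simp [energy, hJ0]
    linarith
  have hint : ‖x‖ ^ 2 < r := by
    have := mul_le_mul_of_nonneg_left (hJmax x hxr) hlam.le
    rw [energy, energy] at hx₀x
    rw [energy] at hgap
    linarith
  have hball : {y : X | ‖y‖ ^ 2 ≤ r} ∈ 𝓝 x :=
    mem_of_superset ((isOpen_lt (f := fun y : X => ‖y‖ ^ 2) (by fun_prop) continuous_const).mem_nhds
      hint) fun _ (hy : _ < r) => hy.le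
  have hcrit :=
    eq_zero_of_isLocalMax_of_hasDerivAt_inner (hJ'.hasDerivAt_energy lam x) (hmax.isLocalMax hball)
  exact ⟨x, hne, hint, (sub_eq_zero.1 hcrit).symm⟩

/-- If `J x = 0 = J 0` then `⟪J' x, x⟫ < 0`, so `J` increases when `x` is shrunk slightly. -/
theorem pos_of_inner_gradient_lt (hJ' : HasGateauxGradient J J') (hJ0 : J 0 = 0) (hr : 0 ≤ r)
    {x : X} (hxr : ‖x‖ ^ 2 ≤ r) (hmax : ∀ y : X, ‖y‖ ^ 2 ≤ r → J y ≤ J x)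
    (hineq : ⟪J' x, x⟫ < 2 * J x) : 0 < J x := by
  have hnonneg : 0 ≤ J x := hJ0 ▸ hmax 0 (by simpa using hr)
  by_contra hnpos
  have hder : ⟪J' x, x⟫ < 0 := by linarith
  obtain ⟨s, hlt, hs⟩ := ((hJ' x x).eventually_nhdsLT_lt hder).and
    (Ioo_mem_nhdsLT (by norm_num : (-1 : ℝ) < 0)) |>.exists
  have hsx : ‖x + s • x‖ ^ 2 ≤ r := by
    have : (1 + s) ^ 2 ≤ 1 := by nlinarith [hs.1, hs.2]
    rw [norm_add_smul_self_sq]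
    nlinarith [sq_nonneg ‖x‖]
  simp only [zero_smul, add_zero] at hlt
  linarith [hmax _ hsx]

/-- Take `x₀ = x` if it is interior; otherwise a slight shrinking of `x`, since then, with
`lam = r / (2 J x)`, the energy along the ray has derivative
`lam ⟪J' x, x⟫ - r < 2 lam J x - r = 0`. -/
theorem exists_energy_pos (hJ' : HasGateauxGradient J J') (hr : 0 < r) {x : X}
    (hxr : ‖x‖ ^ 2 ≤ r) (hpos : 0 < J x) (hineq : ⟪J' x, x⟫ < 2 * J x) :
    ∃ x₀ : X, ‖x₀‖ ^ 2 < r ∧ 0 < energy J (r / (2 * J x)) x₀ := by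
  have hlam : r / (2 * J x) * J x = r / 2 := by field_simp
  rcases hxr.lt_or_eq with hlt | heq
  · exact ⟨x, hlt, by rw [energy, hlam]; linarith⟩
  · have hder : ⟪(r / (2 * J x)) • J' x - x, x⟫ < 0 := by
      have := mul_lt_mul_of_pos_left hineq (by positivity : 0 < r / (2 * J x))
      rw [inner_sub_left, real_inner_smul_left, real_inner_self_eq_norm_sq, heq]
      linarith
    obtain ⟨s, hlt, hs⟩ := ((hJ'.hasDerivAt_energy _ x x).eventually_nhdsLT_lt hder).and
      (Ioo_mem_nhdsLT (by norm_num : (-1 : ℝ) < 0)) |>.exists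
    refine ⟨x + s • x, ?_, ?_⟩
    · have : (1 + s) ^ 2 < 1 := by nlinarith [hs.1, hs.2]
      rw [norm_add_smul_self_sq, heq]
      nlinarith
    · simp only [zero_smul, add_zero, energy, hlam, heq] at hlt ⊢
      linarith

end Hilbert

theorem stmt3 {X : Type*} [NormedAddCommGroup X] [InnerProductSpace ℝ X] [CompleteSpace X]
    (J : X → ℝ) (J' : X → X)
    (husc : ∀ (x : X) (xn : ℕ → X),
      (∀ v : X, Tendsto (fun n => ⟪xn n, v⟫) atTop (nhds ⟪x, v⟫)) →
      limsup (fun n => J (xn n)) atTop ≤ J x)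
    (hgateaux : ∀ x v : X, HasDerivAt (fun s : ℝ => J (x + s • v)) ⟪J' x, v⟫ 0)
    (hJ0 : J 0 = 0)
    (r : ℝ) (hr : 0 < r)
    (xhat : X) (hxhat : ‖xhat‖ ^ 2 ≤ r)
    (hmax : ∀ y : X, ‖y‖ ^ 2 ≤ r → J y ≤ J xhat)
    (hineq : ⟪J' xhat, xhat⟫ < 2 * J xhat) :
    ∃ p q : ℝ, 0 ≤ p ∧ p < q ∧ ∀ lam ∈ Ioo p q,
      ∃ x : X, x ≠ 0 ∧ ‖x‖ ^ 2 < r ∧ x = lam • J' x := by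
  have hpos := pos_of_inner_gradient_lt hgateaux hJ0 hr.le hxhat hmax hineq
  obtain ⟨x₀, hx₀r, hx₀⟩ := exists_energy_pos hgateaux hr hxhat hpos hineq
  set lam₀ := r / (2 * J xhat)
  have hlam₀ : 0 < lam₀ := by positivity
  have hgap₀ : lam₀ * J xhat - energy J lam₀ x₀ < r / 2 := by
    have : lam₀ * J xhat = r / 2 := by
      simp only [lam₀]
      field_simp
    linarith
  have hcont : Continuous fun lam => energy J lam x₀ := by unfold energy; fun_prop
  have hnear : ∀ᶠ lam in 𝓝 lam₀,
      0 < lam ∧ 0 < energy J lam x₀ ∧ lam * J xhat - energy J lam x₀ < r / 2 :=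
    (eventually_gt_nhds hlam₀).and <|
      (continuousAt_const.eventually_lt hcont.continuousAt hx₀).and <|
        ContinuousAt.eventually_lt (by fun_prop) continuousAt_const hgap₀
  obtain ⟨p, q, ⟨hp, hq⟩, hpq⟩ := mem_nhds_iff_exists_Ioo_subset.1 hnear
  refine ⟨max p 0, q, le_max_right _ _, max_lt (hp.trans hq) (hlam₀.trans hq), ?_⟩
  intro lam hlam
  obtain ⟨hlam_pos, hpos_lam, hgap⟩ := hpq ⟨(le_max_left _ _).trans_lt hlam.1, hlam.2⟩
  exact
    exists_eq_smul_gradient_of_energy_pos husc hgateaux hJ0 hmax hlam_pos hx₀r.le hpos_lam hgap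
end

section
/- Let f : [0,∞) → [0,∞) and α : [0,1] → (0,∞) be continuous with f(0) = 0, extend f by 0 on (−∞,0), and set F(ξ) = ∫₀^ξ f(t) dt. Assume that for some a > 0 the function ξ ↦ F(ξ)/ξ² is non-increasing on (0,a] and that for each b > 0 this function is not constant on (0,b]. Let u : [0,1] → ℝ be a continuous function with u(0) = u(1) = 0, admitting a weak derivative with ∫₀¹ |u'(t)|² dt ≤ a², and with sup_{[0,1]} u > 0. Then ∫₀¹ α(t) f(u(t)) u(t) dt < 2 ∫₀¹ α(t) F(u(t)) dt. -/
/-!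
Since `d/dξ (F ξ / ξ²) = (f ξ ξ - 2 F ξ) / ξ³`, antitonicity of `F ξ / ξ²` on `(0, a]` gives
`f ξ ξ ≤ 2 F ξ` there, and as `F ξ / ξ²` is not constant on `(0, m]` for a value `m > 0` of `u`, the mean value
theorem yields `ξ₀ ∈ (0, m)` with strict inequality. The energy bound keeps `u ≤ a`, by AM-GM:
`u t = ∫₀ᵗ d ≤ ∫₀¹ (a/2 + d²/(2a)) ≤ a`. Hence
`α f(u) u ≤ 2 α F(u)` on `[0, 1]`, strictly at a point where `u = ξ₀`; by continuity the
integral inequality is strict.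
-/

open Set MeasureTheory Filter Topology

theorem ContinuousOn.continuous_of_forall_nonpos_eq_zero {f : ℝ → ℝ}
    (hf : ContinuousOn f (Ici 0)) (h0 : ∀ x ≤ 0, f x = 0) : Continuous f := by
  have hmax : f = fun x => f (max x 0) := by
    funext x
    rcases le_or_gt x 0 with hx | hx
    · rw [max_eq_right hx, h0 x hx, h0 0 le_rfl]
    · rw [max_eq_left hx.le]
  rw [hmax]
  exact hf.comp_continuous (continuous_id.max continuous_const) fun x => le_max_right x 0

theorem intervalIntegral_eq_zero_of_forall_nonpos {f : ℝ → ℝ} (h0 : ∀ x ≤ 0, f x = 0) {ξ : ℝ}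
    (hξ : ξ ≤ 0) : ∫ t in (0:ℝ)..ξ, f t = 0 := by
  rw [intervalIntegral.integral_congr (g := fun _ => 0) fun x hx => h0 x ?_]
  · simp
  · rw [uIcc_of_ge hξ] at hx
    exact hx.2

theorem intervalIntegral_le_of_integral_sq_le {d : ℝ → ℝ} {a t : ℝ} (ha : 0 < a)
    (hd : IntervalIntegrable d volume 0 1)
    (hd_sq : IntervalIntegrable (fun s => |d s| ^ 2) volume 0 1)
    (hnorm : ∫ s in (0:ℝ)..1, |d s| ^ 2 ≤ a ^ 2) (ht : t ∈ Icc (0:ℝ) 1) :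
    ∫ s in (0:ℝ)..t, d s ≤ a := by
  set w : ℝ → ℝ := fun s => a / 2 + |d s| ^ 2 / (2 * a)
  have hw : IntervalIntegrable w volume 0 1 := intervalIntegrable_const.add (hd_sq.div_const _)
  have hd_le_w : ∀ s, d s ≤ w s := fun s => by
    have hsq : 2 * a * |d s| ≤ a ^ 2 + |d s| ^ 2 := by nlinarith [sq_nonneg (|d s| - a)]
    have : |d s| ≤ w s := by
      simp only [w]
      rw [div_add_div _ _ two_ne_zero (by positivity), le_div_iff₀ (by positivity)]
      nlinarith
    exact (le_abs_self _).trans this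
  have hsub : uIcc 0 t ⊆ uIcc (0:ℝ) 1 := by
    rw [uIcc_of_le ht.1, uIcc_of_le zero_le_one]
    exact Icc_subset_Icc_right ht.2
  calc ∫ s in (0:ℝ)..t, d s ≤ ∫ s in (0:ℝ)..t, w s :=
        intervalIntegral.integral_mono_on ht.1 (hd.mono_set hsub) (hw.mono_set hsub)
          fun s _ => hd_le_w s
    _ ≤ ∫ s in (0:ℝ)..1, w s :=
        intervalIntegral.integral_mono_interval le_rfl ht.1 ht.2
          (ae_of_all _ fun s => by positivity) hw
    _ = a / 2 + (∫ s in (0:ℝ)..1, |d s| ^ 2) / (2 * a) := by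
        simp only [w]
        rw [intervalIntegral.integral_add intervalIntegrable_const (hd_sq.div_const _),
          intervalIntegral.integral_const, intervalIntegral.integral_div]
        simp
    _ ≤ a := by
        rw [div_add_div _ _ two_ne_zero (by positivity), div_le_iff₀ (by positivity)]
        nlinarith

theorem HasDerivAt.div_sq {F : ℝ → ℝ} {F' ξ : ℝ} (hF : HasDerivAt F F' ξ) (hξ : ξ ≠ 0) :
    HasDerivAt (fun x => F x / x ^ 2) ((F' * ξ - 2 * F ξ) / ξ ^ 3) ξ := by
  refine (hF.fun_div (hasDerivAt_pow 2 ξ) (pow_ne_zero 2 hξ)).congr_deriv ?_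
  field_simp
  ring

theorem mul_le_two_mul_of_antitoneOn_div_sq {F : ℝ → ℝ} {F' ξ a : ℝ} (hF : HasDerivAt F F' ξ)
    (hanti : AntitoneOn (fun x => F x / x ^ 2) (Ioc 0 a)) (hξ : ξ ∈ Ioc 0 a) :
    F' * ξ ≤ 2 * F ξ := by
  have hacc : AccPt ξ (𝓟 (Ioc 0 ξ)) := by
    rw [accPt_principal_iff_nhdsWithin, Ioc_sdiff_right]
    exact right_nhdsWithin_Ioo_neBot hξ.1
  have hderiv := (hF.div_sq hξ.1.ne').hasDerivWithinAt.nonpos_of_antitoneOn hacc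
    (hanti.mono (Ioc_subset_Ioc_right hξ.2))
  have := (div_le_iff₀ (pow_pos hξ.1 3)).mp hderiv
  linarith

theorem exists_mul_lt_two_mul_of_antitoneOn_div_sq {F f : ℝ → ℝ} {a m : ℝ}
    (hF : ∀ ξ, 0 < ξ → HasDerivAt F (f ξ) ξ)
    (hanti : AntitoneOn (fun x => F x / x ^ 2) (Ioc 0 a)) (hm : 0 < m) (hma : m ≤ a)
    (hnotconst : ¬ ∃ c, ∀ ξ ∈ Ioc 0 m, F ξ / ξ ^ 2 = c) :
    ∃ ξ ∈ Ioo 0 m, f ξ * ξ < 2 * F ξ := by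
  push Not at hnotconst
  obtain ⟨ξ₁, hξ₁, hne⟩ := hnotconst (F m / m ^ 2)
  have hlt : F m / m ^ 2 < F ξ₁ / ξ₁ ^ 2 :=
    (hanti ⟨hξ₁.1, hξ₁.2.trans hma⟩ ⟨hm, hma⟩ hξ₁.2).lt_of_ne' hne
  have hξ₁m : ξ₁ < m := hξ₁.2.lt_of_ne (by rintro rfl; exact hne rfl)
  have hG : ∀ x ∈ Icc ξ₁ m,
      HasDerivAt (fun x => F x / x ^ 2) ((f x * x - 2 * F x) / x ^ 3) x := fun x hx =>
    (hF x (hξ₁.1.trans_le hx.1)).div_sq (hξ₁.1.trans_le hx.1).ne'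
  obtain ⟨c, hc, hslope⟩ := exists_hasDerivAt_eq_slope (fun x => F x / x ^ 2) _ hξ₁m
    (fun x hx => (hG x hx).continuousAt.continuousWithinAt)
    (fun x hx => hG x (Ioo_subset_Icc_self hx))
  have hneg : (f c * c - 2 * F c) / c ^ 3 < 0 := by
    rw [hslope]
    exact div_neg_of_neg_of_pos (by linarith) (by linarith)
  have := (div_lt_iff₀ (pow_pos (hξ₁.1.trans hc.1) 3)).mp hneg
  exact ⟨c, ⟨hξ₁.1.trans hc.1, hc.2⟩, by linarith⟩

theorem stmt7_general
    (f α : ℝ → ℝ)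
    (hf_cont : ContinuousOn f (Ici 0))
    (hf_zero : ∀ ξ ≤ (0:ℝ), f ξ = 0)
    (hα_cont : ContinuousOn α (Icc 0 1))
    (hα_pos : ∀ t ∈ Icc (0:ℝ) 1, 0 < α t)
    (F : ℝ → ℝ) (hF : ∀ ξ, F ξ = ∫ t in (0:ℝ)..ξ, f t)
    (a : ℝ) (ha : 0 < a)
    (hmono : ∀ ξ₁ ξ₂, 0 < ξ₁ → ξ₁ ≤ ξ₂ → ξ₂ ≤ a → F ξ₂ / ξ₂ ^ 2 ≤ F ξ₁ / ξ₁ ^ 2)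
    (hnotconst : ∀ b > (0:ℝ), ¬ ∃ c : ℝ, ∀ ξ ∈ Ioc (0:ℝ) b, F ξ / ξ ^ 2 = c)
    (u d : ℝ → ℝ)
    (hu_cont : ContinuousOn u (Icc 0 1))
    (hd_int : IntervalIntegrable d volume 0 1)
    (hd_sq : IntervalIntegrable (fun t => |d t| ^ 2) volume 0 1)
    (hud : ∀ x ∈ Icc (0:ℝ) 1, u x = ∫ t in (0:ℝ)..x, d t)
    (hu0 : u 0 = 0)
    (hnorm : (∫ t in (0:ℝ)..1, |d t| ^ 2) ≤ a ^ 2)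
    (hsup : ∃ t ∈ Icc (0:ℝ) 1, 0 < u t) :
    (∫ t in (0:ℝ)..1, α t * (f (u t) * u t)) < 2 * ∫ t in (0:ℝ)..1, α t * F (u t) := by
  have hfc : Continuous f := hf_cont.continuous_of_forall_nonpos_eq_zero hf_zero
  have hFd : ∀ ξ, HasDerivAt F (f ξ) ξ := fun ξ => by
    rw [funext hF]
    exact intervalIntegral.integral_hasDerivAt_right (hfc.intervalIntegrable _ _)
      (hfc.stronglyMeasurableAtFilter _ _) hfc.continuousAt
  have hFc : Continuous F := continuous_iff_continuousAt.2 fun ξ => (hFd ξ).continuousAt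
  have hanti : AntitoneOn (fun ξ => F ξ / ξ ^ 2) (Ioc 0 a) :=
    fun x hx y hy hxy => hmono x y hx.1 hxy hy.2
  have hle : ∀ ξ ≤ a, f ξ * ξ ≤ 2 * F ξ := fun ξ hξa => by
    rcases le_or_gt ξ 0 with hξ | hξ
    · simp [hf_zero ξ hξ, hF, intervalIntegral_eq_zero_of_forall_nonpos hf_zero hξ]
    · exact mul_le_two_mul_of_antitoneOn_div_sq (hFd ξ) hanti ⟨hξ, hξa⟩
  have hua : ∀ t ∈ Icc (0:ℝ) 1, u t ≤ a := fun t ht => by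
    rw [hud t ht]
    exact intervalIntegral_le_of_integral_sq_le ha hd_int hd_sq hnorm ht
  obtain ⟨t₁, ht₁, hut₁⟩ := hsup
  obtain ⟨ξ₀, hξ₀, hξ₀_lt⟩ := exists_mul_lt_two_mul_of_antitoneOn_div_sq (fun ξ _ => hFd ξ)
    hanti hut₁ (hua t₁ ht₁) (hnotconst _ hut₁)
  obtain ⟨t₀, ht₀, hut₀⟩ : ∃ t₀ ∈ Icc 0 t₁, u t₀ = ξ₀ :=
    intermediate_value_Icc ht₁.1 (hu_cont.mono (Icc_subset_Icc_right ht₁.2))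
      (by rw [hu0]; exact ⟨hξ₀.1.le, hξ₀.2.le⟩)
  rw [← intervalIntegral.integral_const_mul]
  refine intervalIntegral.integral_lt_integral_of_continuousOn_of_le_of_exists_lt zero_lt_one
    (hα_cont.mul ((hfc.comp_continuousOn hu_cont).mul hu_cont))
    (continuousOn_const.mul (hα_cont.mul (hFc.comp_continuousOn hu_cont)))
    (fun t ht => ?_) ⟨t₀, ⟨ht₀.1, ht₀.2.trans ht₁.2⟩, ?_⟩
  · have ht' := Ioc_subset_Icc_self ht
    linear_combination mul_le_mul_of_nonneg_left (hle (u t) (hua t ht')) (hα_pos t ht').le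
  · rw [hut₀]
    linear_combination mul_lt_mul_of_pos_left hξ₀_lt (hα_pos t₀ ⟨ht₀.1, ht₀.2.trans ht₁.2⟩)

theorem stmt7
    (f α : ℝ → ℝ)
    (hf_cont : ContinuousOn f (Ici 0))
    (hf_zero : ∀ ξ ≤ (0:ℝ), f ξ = 0)
    (hf_nonneg : ∀ ξ : ℝ, 0 ≤ f ξ)
    (hα_cont : ContinuousOn α (Icc 0 1))
    (hα_pos : ∀ t ∈ Icc (0:ℝ) 1, 0 < α t)
    (F : ℝ → ℝ) (hF : ∀ ξ, F ξ = ∫ t in (0:ℝ)..ξ, f t)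
    (a : ℝ) (ha : 0 < a)
    (hmono : ∀ ξ₁ ξ₂, 0 < ξ₁ → ξ₁ ≤ ξ₂ → ξ₂ ≤ a → F ξ₂ / ξ₂ ^ 2 ≤ F ξ₁ / ξ₁ ^ 2)
    (hnotconst : ∀ b > (0:ℝ), ¬ ∃ c : ℝ, ∀ ξ ∈ Ioc (0:ℝ) b, F ξ / ξ ^ 2 = c)
    (u d : ℝ → ℝ)
    (hu_cont : ContinuousOn u (Icc 0 1))
    (hd_int : IntervalIntegrable d volume 0 1)
    (hd_sq : IntervalIntegrable (fun t => |d t| ^ 2) volume 0 1)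
    (hud : ∀ x ∈ Icc (0:ℝ) 1, u x = ∫ t in (0:ℝ)..x, d t)
    (hu0 : u 0 = 0) (hu1 : u 1 = 0)
    (hnorm : (∫ t in (0:ℝ)..1, |d t| ^ 2) ≤ a ^ 2)
    (hsup : ∃ t ∈ Icc (0:ℝ) 1, 0 < u t) :
    (∫ t in (0:ℝ)..1, α t * (f (u t) * u t)) < 2 * ∫ t in (0:ℝ)..1, α t * F (u t) :=
  stmt7_general f α hf_cont hf_zero hα_cont hα_pos F hF a ha hmono hnotconst u d hu_cont hd_int
    hd_sq hud hu0 hnorm hsup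
end
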